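/- If an idempotent semiring S satisfies the identity x ≈ xyx + x + xyx, then the multiplicative reduct (S,·) is a normal band, i.e., S satisfies xyzx ≈ xzyx. -/
import Mathlib


class IdemSemiring' (S : Type*) extends Add S, Mul S where
  add_assoc : ∀ a b c : S, a + b + c = a + (b + c)
  mul_assoc : ∀ a b c : S, a * b * c = a * (b * c)
  left_distrib : ∀ a b c : S, a * (b + c) = a * b + a * c
  right_distrib : ∀ a b c : S, (a + b) * c = a * c + b * c
  add_idem : ∀ a : S, a + a = a
  mul_idem : ∀ a : S, a * a = a

def sigmaRel {S : Type*} [IdemSemiring' S] (a b : S) : Prop :=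
  a * b * a = a * b * a + a + a * b * a ∧ b * a * b = b * a * b + b + b * a * b

section Aux

variable {S : Type*} [IdemSemiring' S]

private lemma aa (a b c : S) : a + b + c = a + (b + c) := IdemSemiring'.add_assoc a b c
private lemma ma (a b c : S) : a * b * c = a * (b * c) := IdemSemiring'.mul_assoc a b c
private lemma ld (a b c : S) : a * (b + c) = a * b + a * c := IdemSemiring'.left_distrib a b c
private lemma rd (a b c : S) : (a + b) * c = a * c + b * c := IdemSemiring'.right_distrib a b c
private lemma ai (a : S) : a + a = a := IdemSemiring'.add_idem a
private lemma mi (a : S) : a * a = a := IdemSemiring'.mul_idem a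

/-- `sle b a` : `b` is absorbed by `a` additively on both sides. -/
def sle (b a : S) : Prop := a + b = a ∧ b + a = a

private lemma sle_of {a b : S} (hyp : a = b + a + b) : sle b a := by
  constructor
  · conv_lhs => rw [hyp]
    rw [aa (b + a) b b, ai b]
    exact hyp.symm
  · conv_lhs => rw [hyp]
    rw [← aa b (b + a) b, ← aa b b a, ai b]
    exact hyp.symm

private lemma sle_base (h : ∀ x y : S, x = x * y * x + x + x * y * x) (s t : S) :
    sle (s * t * s) s := sle_of (h s t)

private lemma sle_mul_left (c : S) {a b : S} (hab : sle b a) : sle (c * b) (c * a) := by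
  constructor
  · rw [← ld c a b, hab.1]
  · rw [← ld c b a, hab.2]

private lemma sle_mul_right (c : S) {a b : S} (hab : sle b a) : sle (b * c) (a * c) := by
  constructor
  · rw [← rd a b c, hab.1]
  · rw [← rd b a c, hab.2]

private lemma sle_trans {a b c : S} (h1 : sle c b) (h2 : sle b a) : sle c a := by
  constructor
  · rw [← h2.1, aa a b c, h1.1, h2.1]
  · rw [← h2.2, ← aa c b a, h1.2, h2.2]

private lemma sle_antisymm {a b : S} (h1 : sle b a) (h2 : sle a b) : b = a :=
  h2.1.symm.trans h1.2

private lemma key (a b : S) : a * (a * b) = a * b := by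
  rw [← ma a a b, mi a]

private lemma main_le (h : ∀ x y : S, x = x * y * x + x + x * y * x) (x y z : S) :
    sle (x * y * z * x) (x * z * y * x) := by
  -- order step 1 :  (x·(yxyzy)·x)·(zyxyzx) ⊑ x·(zyxyzx)
  have s1 : sle ((x * (y * x * y * z * y) * x) * (z * y * x * y * z * x))
      (x * (z * y * x * y * z * x)) :=
    sle_mul_right _ (sle_base h x (y * x * y * z * y))
  -- order step 2 :  (xzy)·(x·(yz)·x) ⊑ (xzy)·x
  have s2 : sle ((x * z * y) * (x * (y * z) * x)) ((x * z * y) * x) :=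
    sle_mul_left _ (sle_base h x (y * z))
  -- band equality : xyzx = xyxyzyxzyxyzx
  have e1 : x * y * z * x = (x * (y * x * y * z * y) * x) * (z * y * x * y * z * x) := by
    have k1 := key (x * y) (z * x)
    have k2 := key (y * x * y * z) x
    have k3 := key (z * y * x) (y * z * x)
    simp only [ma] at k1 k2 k3 ⊢
    rw [k3, k2, k1]
  -- band equality : x(zyxyzx) = (xzy)(x(yz)x)   (pure associativity)
  have e2 : x * (z * y * x * y * z * x) = (x * z * y) * (x * (y * z) * x) := by
    simp only [ma]
  rw [← e1] at s1
  rw [← e2] at s2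
  exact sle_trans s1 s2

end Aux

theorem stmt17 {S : Type*} [IdemSemiring' S]
    (h : ∀ x y : S, x = x * y * x + x + x * y * x) :
    ∀ x y z : S, x * y * z * x = x * z * y * x := fun x y z =>
  sle_antisymm (main_le h x y z) (main_le h x z y)
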